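/- Index sufficiency (Corollary 3.11, item 2): for each (d,d') ∈ {0,1}² and all Borel sets A₁, A₂ ⊆ ℝ there exists a measurable function G : [0,1]² → ℝ such that, ℙ-almost surely, 𝔼[ 1{Y₀ ∈ A₁}·1{Y₁ ∈ A₂}·1{D₀ = d}·1{D₁ = d'} | σ(Z) ] = G(h₀(Z), h₁(Z)); that is, the conditional mean given the instruments depends on the instruments only through the pair of propensity scores, so any two instrument values inducing the same propensity scores yield the same conditional mean. -/
import Mathlib


open MeasureTheory ProbabilityTheory

/-- Index sufficiency (Corollary 3.11, item 2): for each `(d,d')` and all Borel sets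
`A₁, A₂ ⊆ ℝ` there is a measurable `G` such that, ℙ-a.s.,
`𝔼[ 1{Y₀∈A₁}·1{Y₁∈A₂}·1{D₀=d}·1{D₁=d'} | σ(Z) ] = G (h₀ (Z ·), h₁ (Z ·))`:
the conditional mean given the instruments depends on them only through the pair of
propensity scores. -/
theorem index_sufficiency
    {Ω 𝒵 𝒰 : Type*} [MeasurableSpace Ω] [MeasurableSpace 𝒵] [MeasurableSpace 𝒰]
    (μ : Measure Ω) [IsProbabilityMeasure μ]
    (Z : Ω → 𝒵) (U : Ω → 𝒰) (V₀ V₁ : Ω → ℝ)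
    (hZ : Measurable Z) (hU : Measurable U)
    (hV₀ : Measurable V₀) (hV₁ : Measurable V₁)
    -- V₀, V₁ uniformly distributed on (0,1)
    (hV₀unif : Measure.map V₀ μ = volume.restrict (Set.Ioo (0:ℝ) 1))
    (hV₁unif : Measure.map V₁ μ = volume.restrict (Set.Ioo (0:ℝ) 1))
    -- measurable threshold functions with values in [0,1]
    (h₀ h₁ : 𝒵 → ℝ) (hh₀ : Measurable h₀) (hh₁ : Measurable h₁)
    (hh₀mem : ∀ z, h₀ z ∈ Set.Icc (0:ℝ) 1) (hh₁mem : ∀ z, h₁ z ∈ Set.Icc (0:ℝ) 1)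
    -- bounded measurable outcome functions (`true` codes treatment 1, `false` codes 0)
    (m₀ m₁ : Bool → Bool → 𝒰 → ℝ)
    (hm₀ : ∀ d d', Measurable (m₀ d d')) (hm₁ : ∀ d d', Measurable (m₁ d d'))
    (hm₀_bdd : ∃ B, ∀ d d' u, |m₀ d d' u| ≤ B) (hm₁_bdd : ∃ B, ∀ d d' u, |m₁ d d' u| ≤ B)
    -- random assignment: Z independent of (V₀, V₁, U)
    (hindep : IndepFun Z (fun ω => (V₀ ω, V₁ ω, U ω)) μ)
    -- binary treatments and observed outcomes
    (D₀ D₁ : Ω → Bool)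
    (hD₀ : ∀ ω, D₀ ω = decide (V₀ ω ≤ h₀ (Z ω)))
    (hD₁ : ∀ ω, D₁ ω = decide (V₁ ω ≤ h₁ (Z ω)))
    (Y₀ Y₁ : Ω → ℝ)
    (hY₀ : ∀ ω, Y₀ ω = m₀ (D₀ ω) (D₁ ω) (U ω))
    (hY₁ : ∀ ω, Y₁ ω = m₁ (D₁ ω) (D₀ ω) (U ω)) :
    ∀ (d d' : Bool) (A₁ A₂ : Set ℝ), MeasurableSet A₁ → MeasurableSet A₂ →
      ∃ G : ℝ × ℝ → ℝ, Measurable G ∧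
        μ[fun ω => Set.indicator A₁ (fun _ => (1:ℝ)) (Y₀ ω)
            * Set.indicator A₂ (fun _ => (1:ℝ)) (Y₁ ω)
            * (if D₀ ω = d then (1:ℝ) else 0) * (if D₁ ω = d' then (1:ℝ) else 0) |
          MeasurableSpace.comap Z inferInstance]
          =ᵐ[μ] fun ω => G (h₀ (Z ω), h₁ (Z ω)) := by

  intro d d' A₁ A₂ hA₁ hA₂
  -- the joint "noise" variable
  set W : Ω → ℝ × ℝ × 𝒰 := fun ω => (V₀ ω, V₁ ω, U ω) with hWdef
  have hW : Measurable W := (hV₀.prodMk (hV₁.prodMk hU))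
  set ν : Measure (ℝ × ℝ × 𝒰) := μ.map W with hνdef
  haveI : IsProbabilityMeasure ν := Measure.isProbabilityMeasure_map hW.aemeasurable
  haveI : IsProbabilityMeasure (μ.map Z) := Measure.isProbabilityMeasure_map hZ.aemeasurable
  -- the structural function
  set g : (ℝ × ℝ) × (ℝ × ℝ × 𝒰) → ℝ := fun x =>
    A₁.indicator (fun _ => (1:ℝ))
        (m₀ (decide (x.2.1 ≤ x.1.1)) (decide (x.2.2.1 ≤ x.1.2)) x.2.2.2)
      * A₂.indicator (fun _ => (1:ℝ))
        (m₁ (decide (x.2.2.1 ≤ x.1.2)) (decide (x.2.1 ≤ x.1.1)) x.2.2.2)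
      * (if decide (x.2.1 ≤ x.1.1) = d then (1:ℝ) else 0)
      * (if decide (x.2.2.1 ≤ x.1.2) = d' then (1:ℝ) else 0) with hgdef
  have hb₀ : Measurable (fun x : (ℝ × ℝ) × (ℝ × ℝ × 𝒰) => decide (x.2.1 ≤ x.1.1)) := by
    apply measurable_to_bool
    have : (fun x : (ℝ × ℝ) × (ℝ × ℝ × 𝒰) => decide (x.2.1 ≤ x.1.1)) ⁻¹' {true}
        = {x : (ℝ × ℝ) × (ℝ × ℝ × 𝒰) | x.2.1 ≤ x.1.1} := by
      ext x; simp
    rw [this]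
    exact measurableSet_le (measurable_fst.comp measurable_snd)
      (measurable_fst.comp measurable_fst)
  have hb₁ : Measurable (fun x : (ℝ × ℝ) × (ℝ × ℝ × 𝒰) => decide (x.2.2.1 ≤ x.1.2)) := by
    apply measurable_to_bool
    have : (fun x : (ℝ × ℝ) × (ℝ × ℝ × 𝒰) => decide (x.2.2.1 ≤ x.1.2)) ⁻¹' {true}
        = {x : (ℝ × ℝ) × (ℝ × ℝ × 𝒰) | x.2.2.1 ≤ x.1.2} := by
      ext x; simp
    rw [this]
    exact measurableSet_le ((measurable_fst.comp measurable_snd).comp measurable_snd)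
      (measurable_snd.comp measurable_fst)
  have hu : Measurable (fun x : (ℝ × ℝ) × (ℝ × ℝ × 𝒰) => x.2.2.2) :=
    ((measurable_snd.comp measurable_snd).comp measurable_snd)
  have hM₀ : Measurable (fun q : 𝒰 × (Bool × Bool) => m₀ q.2.1 q.2.2 q.1) :=
    measurable_from_prod_countable_left (fun bb => hm₀ bb.1 bb.2)
  have hM₁ : Measurable (fun q : 𝒰 × (Bool × Bool) => m₁ q.2.1 q.2.2 q.1) :=
    measurable_from_prod_countable_left (fun bb => hm₁ bb.1 bb.2)
  have hg : Measurable g := by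
    apply Measurable.mul
    apply Measurable.mul
    apply Measurable.mul
    · exact (measurable_const.indicator hA₁).comp
        (hM₀.comp (hu.prodMk (hb₀.prodMk hb₁)))
    · exact (measurable_const.indicator hA₂).comp
        (hM₁.comp (hu.prodMk (hb₁.prodMk hb₀)))
    · exact (Measurable.of_discrete (f := fun b : Bool => if b = d then (1:ℝ) else 0)).comp hb₀
    · exact (Measurable.of_discrete (f := fun b : Bool => if b = d' then (1:ℝ) else 0)).comp hb₁
  have hg01 : ∀ x, ‖g x‖ ≤ 1 := by
    intro x
    classical
    simp only [hgdef, Real.norm_eq_abs]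
    rw [Set.indicator_apply, Set.indicator_apply]
    split_ifs <;> norm_num
  -- the index function
  set G : ℝ × ℝ → ℝ := fun p => ∫ w, g (p, w) ∂ν with hGdef
  have hGmeas : Measurable G := by
    have := (hg.stronglyMeasurable.integral_prod_right' (ν := ν))
    exact this.measurable
  have hG01 : ∀ p, ‖G p‖ ≤ 1 := by
    intro p
    calc ‖∫ w, g (p, w) ∂ν‖ ≤ ∫ w, ‖g (p, w)‖ ∂ν := norm_integral_le_integral_norm _
    _ ≤ ∫ _, (1:ℝ) ∂ν := by
        apply integral_mono_of_nonneg (Filter.Eventually.of_forall fun w => norm_nonneg _)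
          (integrable_const 1) (Filter.Eventually.of_forall fun w => hg01 _)
    _ = 1 := by simp
  refine ⟨G, hGmeas, ?_⟩
  -- F: the function of (Z, W)
  set F : 𝒵 × (ℝ × ℝ × 𝒰) → ℝ := fun zw => g ((h₀ zw.1, h₁ zw.1), zw.2) with hFdef
  have hF : Measurable F :=
    hg.comp (((hh₀.comp measurable_fst).prodMk (hh₁.comp measurable_fst)).prodMk
      measurable_snd)
  have hfe : (fun ω => Set.indicator A₁ (fun _ => (1:ℝ)) (Y₀ ω)
      * Set.indicator A₂ (fun _ => (1:ℝ)) (Y₁ ω)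
      * (if D₀ ω = d then (1:ℝ) else 0) * (if D₁ ω = d' then (1:ℝ) else 0))
      = fun ω => F (Z ω, W ω) := by
    funext ω
    simp only [hFdef, hgdef, hY₀, hY₁, hD₀, hD₁, hWdef]
  have hm : MeasurableSpace.comap Z inferInstance ≤ (inferInstance : MeasurableSpace Ω) :=
    hZ.comap_le
  haveI : SigmaFinite (μ.trim hm) := by
    haveI := isFiniteMeasure_trim hm (μ := μ)
    infer_instance
  -- joint law is the product law
  have hprod : μ.map (fun ω => (Z ω, W ω)) = (μ.map Z).prod ν :=
    (ProbabilityTheory.indepFun_iff_map_prod_eq_prod_map_map hZ.aemeasurable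
      hW.aemeasurable).mp hindep
  have hZW : Measurable (fun ω => (Z ω, W ω)) := hZ.prodMk hW
  -- integrability facts
  have hf_int : Integrable (fun ω => F (Z ω, W ω)) μ :=
    ⟨(hF.comp hZW).aestronglyMeasurable,
      HasFiniteIntegral.of_bounded (C := 1) (Filter.Eventually.of_forall fun ω => hg01 _)⟩
  have hFprod_int : Integrable F ((μ.map Z).prod ν) :=
    ⟨hF.aestronglyMeasurable,
      HasFiniteIntegral.of_bounded (C := 1) (Filter.Eventually.of_forall fun x => hg01 _)⟩
  have hg_int : Integrable (fun ω => G (h₀ (Z ω), h₁ (Z ω))) μ :=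
    ⟨((hGmeas.comp (hh₀.prodMk hh₁)).comp hZ).aestronglyMeasurable,
      HasFiniteIntegral.of_bounded (C := 1) (Filter.Eventually.of_forall fun ω => hG01 _)⟩
  have key : (fun ω => G (h₀ (Z ω), h₁ (Z ω))) =ᵐ[μ]
      μ[fun ω => F (Z ω, W ω) | MeasurableSpace.comap Z inferInstance] := by
    apply ae_eq_condExp_of_forall_setIntegral_eq hm hf_int
    · intro s _ _
      exact hg_int.integrableOn
    · intro s hs _
      obtain ⟨B, hB, rfl⟩ := hs
      have h1 : ∫ ω in Z ⁻¹' B, G (h₀ (Z ω), h₁ (Z ω)) ∂μ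
          = ∫ z in B, G (h₀ z, h₁ z) ∂(μ.map Z) :=
        (setIntegral_map (f := fun z => G (h₀ z, h₁ z)) hB
          ((hGmeas.comp (hh₀.prodMk hh₁)).aestronglyMeasurable) hZ.aemeasurable).symm
      have h2 : ∫ ω in Z ⁻¹' B, F (Z ω, W ω) ∂μ
          = ∫ p in B ×ˢ (Set.univ : Set (ℝ × ℝ × 𝒰)), F p ∂((μ.map Z).prod ν) := by
        rw [← hprod,
          setIntegral_map (hB.prod MeasurableSet.univ) hF.aestronglyMeasurable
            hZW.aemeasurable]
        have hpre : (fun ω => (Z ω, W ω)) ⁻¹' (B ×ˢ (Set.univ : Set (ℝ × ℝ × 𝒰)))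
            = Z ⁻¹' B := by
          ext ω; simp
        rw [hpre]
      have h3 : ∫ p in B ×ˢ (Set.univ : Set (ℝ × ℝ × 𝒰)), F p ∂((μ.map Z).prod ν)
          = ∫ z in B, ∫ w, F (z, w) ∂ν ∂(μ.map Z) := by
        rw [setIntegral_prod _ hFprod_int.integrableOn, Measure.restrict_univ]
      rw [h1, h2, h3]
    · have hZm : Measurable[MeasurableSpace.comap Z inferInstance] Z :=
        Measurable.of_comap_le le_rfl
      exact StronglyMeasurable.aestronglyMeasurable
        (((hGmeas.comp (hh₀.prodMk hh₁)).comp hZm).stronglyMeasurable)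
  rw [hfe]
  exact key.symm
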